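/- For every j ∈ ℤ and every (ξ₁, ξ₂) ∈ ℝ² with 0 < |z − π j| ≤ 1/2, where z = ξ₁ + i ξ₂, one has |X(ξ₁, ξ₂) − (log |z − π j| + log 2 − ξ₂)| ≤ |z − π j|². (This is the representation (2.12): near each point ξ^{(j)} = (π j, 0) one has X(ξ) = ln ρ + ln 2 − ξ₂ + X̃(ξ) with ρ = |ξ − ξ^{(j)}| and X̃(ξ) = O(ρ²).) -/

import Mathlib

/-! Since `sin` is `π`-antiperiodic, `|sin z| = |sin w|` with `w = z − π j`, and `sin w = w + O(|w|³)`
near `0`; hence `log |sin w| − log |w| = O(|w|²)`. -/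

open Real

/-- The boundary-layer function `X(ξ) = Re ln sin z + ln 2 − ξ₂`, `z = ξ₁ + i ξ₂`. -/
noncomputable def boundaryLayerX (ξ : ℝ × ℝ) : ℝ :=
  Real.log (‖Complex.sin ((ξ.1 : ℂ) + (ξ.2 : ℂ) * Complex.I)‖) +
    Real.log 2 - ξ.2

lemma Real.abs_log_sub_log_le {a b : ℝ} (ha : 0 < a) (hb : 0 < b) :
    |log a - log b| ≤ |a - b| / min a b := by
  have hmin : 0 < min a b := lt_min ha hb
  rw [abs_le]
  constructor
  · have h := log_le_sub_one_of_pos (div_pos hb ha)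
    rw [log_div hb.ne' ha.ne', div_sub_one ha.ne'] at h
    have : (b - a) / a ≤ |a - b| / min a b :=
      div_le_div₀ (abs_nonneg _) (by rw [abs_sub_comm]; exact le_abs_self _) hmin (min_le_left a b)
    linarith
  · have h := log_le_sub_one_of_pos (div_pos ha hb)
    rw [log_div ha.ne' hb.ne', div_sub_one hb.ne'] at h
    exact h.trans (div_le_div₀ (abs_nonneg _) (le_abs_self _) hmin (min_le_right a b))

namespace Complex

lemma norm_sin_sub_int_mul_pi (z : ℂ) (n : ℤ) : ‖sin (z - n * π)‖ = ‖sin z‖ := by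
  rw [sin_antiperiodic.sub_int_mul_eq n, norm_mul, Int.cast_negOnePow, norm_zpow, norm_neg,
    norm_one, one_zpow, one_mul]

lemma norm_sin_sub_self_le {z : ℂ} (hz : ‖z‖ ≤ 1) : ‖sin z - z‖ ≤ ‖z‖ ^ 3 / 5 := by
  have htaylor := sin_bound hz
  have hcube : ‖z ^ 3 / 6‖ = ‖z‖ ^ 3 / 6 := by simp
  have hpow : ‖z‖ ^ 5 ≤ ‖z‖ ^ 3 := pow_le_pow_of_le_one (norm_nonneg z) hz (by norm_num)
  calc ‖sin z - z‖ = ‖(sin z - (z - z ^ 3 / 6)) - z ^ 3 / 6‖ := by ring_nf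
    _ ≤ ‖z‖ ^ 5 / 100 + ‖z‖ ^ 3 / 6 := (norm_sub_le _ _).trans (by rw [hcube]; gcongr)
    _ ≤ ‖z‖ ^ 3 / 5 := by linarith [pow_nonneg (norm_nonneg z) 3]

lemma abs_log_norm_sin_sub_log_norm_le {w : ℂ} (h0 : 0 < ‖w‖) (h : ‖w‖ ≤ 1 / 2) :
    |Real.log ‖sin w‖ - Real.log ‖w‖| ≤ ‖w‖ ^ 2 := by
  set ρ := ‖w‖
  have hdist : |‖sin w‖ - ρ| ≤ ρ ^ 3 / 5 :=
    (abs_norm_sub_norm_le _ _).trans (norm_sin_sub_self_le (by linarith))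
  have hsmall : ρ ^ 3 / 5 ≤ ρ / 20 := by nlinarith [mul_pos h0 h0]
  have hsin : 19 * ρ / 20 ≤ ‖sin w‖ := by linarith [(abs_le.mp hdist).1]
  have hmin : 19 * ρ / 20 ≤ min ‖sin w‖ ρ := le_min hsin (by linarith)
  calc |Real.log ‖sin w‖ - Real.log ρ| ≤ |‖sin w‖ - ρ| / min ‖sin w‖ ρ :=
        Real.abs_log_sub_log_le (by linarith) h0
    _ ≤ (ρ ^ 3 / 5) / (19 * ρ / 20) := div_le_div₀ (by positivity) hdist (by positivity) hmin
    _ = 4 / 19 * ρ ^ 2 := by field_simp; ring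
    _ ≤ ρ ^ 2 := by nlinarith [sq_nonneg ρ]

end Complex

/-- Representation (2.12): near each point `ξ^{(j)} = (π j, 0)` one has
`X(ξ) = ln ρ + ln 2 − ξ₂ + O(ρ²)` with `ρ = |z − π j|`, `z = ξ₁ + i ξ₂`. -/
theorem boundaryLayerX_local_representation (j : ℤ) (ξ₁ ξ₂ : ℝ)
    (h1 : 0 < ‖((ξ₁ : ℂ) + (ξ₂ : ℂ) * Complex.I) - (Real.pi : ℂ) * (j : ℂ)‖)
    (h2 : ‖((ξ₁ : ℂ) + (ξ₂ : ℂ) * Complex.I) - (Real.pi : ℂ) * (j : ℂ)‖ ≤ 1 / 2) :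
    |boundaryLayerX (ξ₁, ξ₂) -
        (Real.log (‖((ξ₁ : ℂ) + (ξ₂ : ℂ) * Complex.I) - (Real.pi : ℂ) * (j : ℂ)‖) +
          Real.log 2 - ξ₂)|
      ≤ (‖((ξ₁ : ℂ) + (ξ₂ : ℂ) * Complex.I) - (Real.pi : ℂ) * (j : ℂ)‖) ^ 2 := by
  set z : ℂ := (ξ₁ : ℂ) + (ξ₂ : ℂ) * Complex.I
  set w : ℂ := z - (Real.pi : ℂ) * (j : ℂ)
  have hsin : ‖Complex.sin z‖ = ‖Complex.sin w‖ := by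
    rw [← Complex.norm_sin_sub_int_mul_pi z j, mul_comm]
  have hX : boundaryLayerX (ξ₁, ξ₂) - (Real.log ‖w‖ + Real.log 2 - ξ₂) =
      Real.log ‖Complex.sin w‖ - Real.log ‖w‖ := by
    rw [boundaryLayerX, ← hsin]
    ring
  rw [hX]
  exact Complex.abs_log_norm_sin_sub_log_norm_le h1 h2
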